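/- Let Q be a poset in P^ℓ_MFP. Then the following are equivalent: (i) for every x ∈ Q there exists y ∈ x^⊥ such that x^⊥ ∩ y^⊥ = {0}; (ii) for every x ∈ Q there exists y ∈ Q such that V'(y) = V'(x^⊥), i.e., a minimal prime ideal contains y if and only if it contains the set x^⊥. -/
import Mathlib


namespace ZD

variable (Q : Type*) [PartialOrder Q] [OrderBot Q]

variable {Q} in
/-- The lower cone `A^ℓ` of a subset of a poset. -/
def lCone (A : Set Q) : Set Q := {x | ∀ a ∈ A, x ≤ a}

variable {Q} in
/-- The upper cone `A^u` of a subset of a poset. -/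
def uCone (A : Set Q) : Set Q := {x | ∀ a ∈ A, a ≤ x}

variable {Q} in
/-- An ideal of a poset: nonempty and `a, b ∈ I` implies `{a,b}^{uℓ} ⊆ I`. -/
def IsIdeal (I : Set Q) : Prop :=
  I.Nonempty ∧ ∀ a ∈ I, ∀ b ∈ I, lCone (uCone {a, b}) ⊆ I

variable {Q} in
/-- A filter of a poset: nonempty and `a, b ∈ F` implies `{a,b}^{ℓu} ⊆ F`. -/
def IsPFilter (F : Set Q) : Prop :=
  F.Nonempty ∧ ∀ a ∈ F, ∀ b ∈ F, uCone (lCone {a, b}) ⊆ F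

variable {Q} in
/-- An ℓ-filter: a filter such that `{a,b}^ℓ ∩ F ≠ ∅` for all `a, b ∈ F`. -/
def IsLFilter (F : Set Q) : Prop :=
  IsPFilter F ∧ ∀ a ∈ F, ∀ b ∈ F, (lCone {a, b} ∩ F).Nonempty

variable {Q} in
/-- A prime ideal of a poset. -/
def IsPrimeIdeal (P : Set Q) : Prop :=
  IsIdeal P ∧ P ≠ Set.univ ∧ ∀ x y : Q, lCone {x, y} ⊆ P → x ∈ P ∨ y ∈ P

variable {Q} in
/-- A prime filter of a poset. -/
def IsPrimeFilter (F : Set Q) : Prop :=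
  IsPFilter F ∧ F ≠ Set.univ ∧ ∀ x y : Q, uCone {x, y} ⊆ F → x ∈ F ∨ y ∈ F

variable {Q} in
/-- A maximal filter: maximal among proper filters. -/
def IsMaxFilter (F : Set Q) : Prop :=
  IsPFilter F ∧ F ≠ Set.univ ∧
    ∀ G : Set Q, IsPFilter G → G ≠ Set.univ → F ⊆ G → F = G

variable {Q} in
/-- A maximal ℓ-filter: maximal among proper ℓ-filters. -/
def IsMaxLFilter (F : Set Q) : Prop :=
  IsLFilter F ∧ F ≠ Set.univ ∧
    ∀ G : Set Q, IsLFilter G → G ≠ Set.univ → F ⊆ G → F = G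

/-- The class `P^ℓ_MFP`: every maximal filter is prime and every maximal ℓ-filter
is a maximal filter. -/
def MemPMFPl : Prop :=
  (∀ F : Set Q, IsMaxFilter F → IsPrimeFilter F) ∧
  (∀ F : Set Q, IsMaxLFilter F → IsMaxFilter F)

variable {Q} in
/-- A minimal prime ideal of a poset. -/
def IsMinPrimeIdeal (P : Set Q) : Prop :=
  IsPrimeIdeal P ∧ ∀ P' : Set Q, IsPrimeIdeal P' → P' ⊆ P → P' = P

variable {Q} in
/-- The annihilator `x^⊥` of an element. -/
def ann (x : Q) : Set Q := {y | lCone {x, y} = {⊥}}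

variable {Q} in
/-- The annihilator `A^⊥` of a subset. -/
def annSet (A : Set Q) : Set Q := {y | ∀ x ∈ A, lCone {x, y} = {⊥}}

variable {Q} in
/-- The smallest ideal `(x] ∨ (y]` containing the principal ideals `(x]` and `(y]`. -/
def idealSup (x y : Q) : Set Q :=
  ⋂₀ {I : Set Q | IsIdeal I ∧ Set.Iic x ⊆ I ∧ Set.Iic y ⊆ I}

/-- A poset is quasi-complemented if for every `x` there is `y ≠ x` with
`{x,y}^ℓ = {0}` and `((x] ∨ (y])^⊥ = {0}`. -/
def QuasiComplemented : Prop :=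
  ∀ x : Q, ∃ y : Q, y ≠ x ∧ lCone {x, y} = {⊥} ∧ annSet (idealSup x y) = {⊥}

/-- A poset is weakly quasi-complemented if for every `x` there are finitely many
`y₁, …, yₙ` (n ≥ 1), all distinct from `x`, with `x^⊥⊥ = y₁^⊥ ∩ ⋯ ∩ yₙ^⊥`. -/
def WeaklyQuasiComplemented : Prop :=
  ∀ x : Q, ∃ s : Finset Q, s.Nonempty ∧ x ∉ s ∧ annSet (ann x) = ⋂ y ∈ s, ann y

/-- The annihilator condition (a.c.). -/
def SatisfiesAC : Prop := ∀ x y : Q, ∃ z : Q, ann x ∩ ann y = ann z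

/-- The prime spectrum of a poset. -/
def Spec := {P : Set Q // IsPrimeIdeal P}

/-- The Zariski topology on `Spec Q`, whose closed sets are the sets
`V(I) = {P : I ⊆ P}` for ideals `I` of `Q`. -/
instance : TopologicalSpace (Spec Q) :=
  TopologicalSpace.generateFrom
    {U : Set (Spec Q) | ∃ I : Set Q, IsIdeal I ∧ U = {P : Spec Q | ¬ I ⊆ P.1}}

variable {Q} in
/-- `V(x)`: the prime ideals containing `x`. -/
def zV (x : Q) : Set (Spec Q) := {P : Spec Q | x ∈ P.1}

variable {Q} in
/-- `D(x)`: the prime ideals not containing `x`. -/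
def zD (x : Q) : Set (Spec Q) := {P : Spec Q | x ∉ P.1}

/-- `Min(Q)` as a subset of `Spec Q`. -/
def MinSpec : Set (Spec Q) := {P : Spec Q | ∀ P' : Set Q, IsPrimeIdeal P' → P' ⊆ P.1 → P' = P.1}

variable {Q} in
/-- Adjacency in the zero-divisor graph `Γ(Q)`. -/
def zdAdj (x y : Q) : Prop :=
  x ≠ y ∧ x ≠ ⊥ ∧ y ≠ ⊥ ∧ lCone {x, y} = ({⊥} : Set Q)

variable {Q} in
/-- Vertices of the zero-divisor graph `Γ(Q)`: the nonzero zero-divisors. -/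
def IsZDVertex (x : Q) : Prop :=
  x ≠ ⊥ ∧ ∃ y : Q, y ≠ ⊥ ∧ lCone {x, y} = ({⊥} : Set Q)

variable {Q} in
/-- `y` is a complement of `x` in `Γ(Q)`. -/
def IsComplementOf (x y : Q) : Prop :=
  zdAdj x y ∧ ∀ c : Q, ¬ (zdAdj c x ∧ zdAdj c y)

/-- The zero-divisor graph `Γ(Q)` is complemented. -/
def GammaComplemented : Prop :=
  ∀ x : Q, IsZDVertex x → ∃ y : Q, IsComplementOf x y

/-- The zero-divisor graph `Γ(Q)` is uniquely complemented. -/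
def GammaUniquelyComplemented : Prop :=
  GammaComplemented Q ∧
    ∀ a b c : Q, IsComplementOf a b → IsComplementOf a c →
      ∀ x : Q, (zdAdj x b ↔ zdAdj x c)

end ZD

namespace ZD

variable {Q : Type*} [PartialOrder Q] [OrderBot Q]

lemma mem_lCone_pair {x y t : Q} : t ∈ lCone {x, y} ↔ t ≤ x ∧ t ≤ y := by
  simp [lCone]

lemma bot_mem_lCone (A : Set Q) : ⊥ ∈ lCone A := fun _ _ => bot_le

lemma lCone_pair_eq_bot_iff {x y : Q} :
    lCone {x, y} = ({⊥} : Set Q) ↔ ∀ t, t ≤ x → t ≤ y → t = ⊥ := by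
  constructor
  · intro h t htx hty
    have : t ∈ lCone {x, y} := mem_lCone_pair.2 ⟨htx, hty⟩
    rw [h] at this; exact this
  · intro h
    apply Set.eq_singleton_iff_unique_mem.2
    exact ⟨bot_mem_lCone _, fun t ht => h t (mem_lCone_pair.1 ht).1 (mem_lCone_pair.1 ht).2⟩

lemma mem_ann_iff {x y : Q} : y ∈ ann x ↔ ∀ t, t ≤ x → t ≤ y → t = ⊥ := by
  rw [show (y ∈ ann x) ↔ lCone {x, y} = ({⊥} : Set Q) from Iff.rfl]
  exact lCone_pair_eq_bot_iff

lemma bot_mem_ann (x : Q) : ⊥ ∈ ann x :=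
  mem_ann_iff.2 fun t _ ht => le_bot_iff.1 ht

lemma ann_downClosed {x w t : Q} (hw : w ∈ ann x) (h : t ≤ w) : t ∈ ann x :=
  mem_ann_iff.2 fun s hsx hst => mem_ann_iff.1 hw s hsx (hst.trans h)

lemma IsIdeal.downClosed {I : Set Q} (hI : IsIdeal I) {a t : Q} (ha : a ∈ I) (h : t ≤ a) :
    t ∈ I :=
  hI.2 a ha a ha (fun u hu => h.trans (hu a (Set.mem_insert _ _)))

lemma IsPFilter.upClosed {F : Set Q} (hF : IsPFilter F) {a t : Q} (ha : a ∈ F) (h : a ≤ t) :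
    t ∈ F :=
  hF.2 a ha a ha (fun b hb => (hb a (Set.mem_insert _ _)).trans h)

lemma IsPrimeIdeal.bot_mem {P : Set Q} (hP : IsPrimeIdeal P) : ⊥ ∈ P := by
  obtain ⟨a, ha⟩ := hP.1.1
  exact hP.1.downClosed ha bot_le

lemma IsPFilter.bot_notMem {F : Set Q} (hF : IsPFilter F) (hne : F ≠ Set.univ) : ⊥ ∉ F :=
  fun h => hne (Set.eq_univ_of_forall fun z => hF.upClosed h bot_le)

/-- The complement of a prime ideal is a proper ℓ-filter. -/
lemma compl_primeIdeal_lFilter {P : Set Q} (hP : IsPrimeIdeal P) :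
    IsLFilter Pᶜ ∧ Pᶜ ≠ Set.univ := by
  have hex : ∀ a ∉ P, ∀ b ∉ P, ∃ t ∈ lCone {a, b}, t ∉ P := by
    intro a ha b hb
    by_contra h
    push_neg at h
    rcases hP.2.2 a b (fun t ht => h t ht) with h' | h'
    · exact ha h'
    · exact hb h'
  refine ⟨⟨⟨?_, ?_⟩, ?_⟩, ?_⟩
  · obtain ⟨x, hx⟩ := Set.ne_univ_iff_exists_notMem P |>.1 hP.2.1
    exact ⟨x, hx⟩
  · intro a ha b hb c hc hcP
    obtain ⟨t, htl, htP⟩ := hex a ha b hb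
    exact htP (hP.1.downClosed hcP (hc t htl))
  · intro a ha b hb
    obtain ⟨t, htl, htP⟩ := hex a ha b hb
    exact ⟨t, htl, htP⟩
  · intro h
    have : ⊥ ∈ Pᶜ := h ▸ Set.mem_univ _
    exact this hP.bot_mem

/-- The complement of a maximal ℓ-filter is a minimal prime ideal. -/
lemma compl_maxLFilter_minPrime (hQ : MemPMFPl Q) {M : Set Q} (hM : IsMaxLFilter M) :
    IsPrimeIdeal Mᶜ ∧ ∀ P' : Set Q, IsPrimeIdeal P' → P' ⊆ Mᶜ → P' = Mᶜ := by
  have hmax : IsMaxFilter M := hQ.2 M hM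
  have hprime : IsPrimeFilter M := hQ.1 M hmax
  have hPI : IsPrimeIdeal Mᶜ := by
    refine ⟨⟨?_, ?_⟩, ?_, ?_⟩
    · obtain ⟨x, hx⟩ := Set.ne_univ_iff_exists_notMem M |>.1 hM.2.1
      exact ⟨x, hx⟩
    · intro a ha b hb c hc hcM
      have hu : uCone {a, b} ⊆ M := by
        intro u hu
        exact hM.1.1.upClosed hcM (hc u hu)
      rcases hprime.2.2 a b hu with h | h
      · exact ha h
      · exact hb h
    · intro h
      obtain ⟨m, hm⟩ := hM.1.1.1
      have : m ∈ Mᶜ := h ▸ Set.mem_univ m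
      exact this hm
    · intro x y hxy
      by_contra h
      push_neg at h
      obtain ⟨hx, hy⟩ := h
      obtain ⟨t, htl, htM⟩ := hM.1.2 x (not_not.1 hx) y (not_not.1 hy)
      exact (hxy htl) htM
  refine ⟨hPI, ?_⟩
  intro P' hP' hsub
  have hF := compl_primeIdeal_lFilter hP'
  have : M ⊆ P'ᶜ := fun m hm hmP => (hsub hmP) hm
  have := hM.2.2 P'ᶜ hF.1 hF.2 this
  rw [this, compl_compl]

end ZD

namespace ZD

variable {Q : Type*} [PartialOrder Q] [OrderBot Q]

/-- Every proper ℓ-filter extends to a maximal ℓ-filter. -/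
lemma exists_maxLFilter {F : Set Q} (hF : IsLFilter F) (hne : F ≠ Set.univ) :
    ∃ M, F ⊆ M ∧ IsMaxLFilter M := by
  have hchains : ∀ c ⊆ {G : Set Q | IsLFilter G ∧ G ≠ Set.univ},
      IsChain (· ⊆ ·) c → c.Nonempty →
      ∃ ub ∈ {G : Set Q | IsLFilter G ∧ G ≠ Set.univ}, ∀ s ∈ c, s ⊆ ub := by
    intro c hcS hchain hcne
    refine ⟨⋃₀ c, ⟨⟨⟨?_, ?_⟩, ?_⟩, ?_⟩, fun s hs => Set.subset_sUnion_of_mem hs⟩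
    · obtain ⟨s, hs⟩ := hcne
      obtain ⟨x, hx⟩ := (hcS hs).1.1.1
      exact ⟨x, s, hs, hx⟩
    · rintro a ⟨s, hs, has⟩ b ⟨t, ht, hbt⟩ x hx
      rcases hchain.total hs ht with h | h
      · exact ⟨t, ht, (hcS ht).1.1.2 a (h has) b hbt hx⟩
      · exact ⟨s, hs, (hcS hs).1.1.2 a has b (h hbt) hx⟩
    · rintro a ⟨s, hs, has⟩ b ⟨t, ht, hbt⟩
      rcases hchain.total hs ht with h | h
      · obtain ⟨u, hul, huF⟩ := (hcS ht).1.2 a (h has) b hbt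
        exact ⟨u, hul, t, ht, huF⟩
      · obtain ⟨u, hul, huF⟩ := (hcS hs).1.2 a has b (h hbt)
        exact ⟨u, hul, s, hs, huF⟩
    · intro h
      have hbot : ⊥ ∈ ⋃₀ c := h ▸ Set.mem_univ _
      obtain ⟨s, hs, hbs⟩ := hbot
      exact (hcS hs).1.1.bot_notMem (hcS hs).2 hbs
  obtain ⟨M, hFM, hMmax⟩ := zorn_subset_nonempty
    {G : Set Q | IsLFilter G ∧ G ≠ Set.univ} hchains F ⟨hF, hne⟩
  refine ⟨M, hFM, ⟨hMmax.1.1, hMmax.1.2, ?_⟩⟩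
  intro G hG hGne hMG
  exact ((hMmax.2 ⟨hG, hGne⟩ hMG).antisymm hMG).symm

/-- Every nonzero element avoids some minimal prime ideal. -/
lemma exists_minPrime_notMem (hQ : MemPMFPl Q) {a : Q} (ha : a ≠ ⊥) :
    ∃ P : Set Q, (IsPrimeIdeal P ∧ ∀ P', IsPrimeIdeal P' → P' ⊆ P → P' = P) ∧ a ∉ P := by
  have hprin : IsLFilter (uCone {a} : Set Q) ∧ (uCone {a} : Set Q) ≠ Set.univ := by
    have hmem : a ∈ (uCone {a} : Set Q) := fun b hb => by
      rw [Set.mem_singleton_iff] at hb; exact hb.le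
    refine ⟨⟨⟨⟨a, hmem⟩, ?_⟩, ?_⟩, ?_⟩
    · intro x hx y hy c hc b hb
      rw [Set.mem_singleton_iff] at hb
      rw [hb]
      exact hc a (mem_lCone_pair.2 ⟨hx a rfl, hy a rfl⟩)
    · intro x hx y hy
      exact ⟨a, mem_lCone_pair.2 ⟨hx a rfl, hy a rfl⟩, hmem⟩
    · intro h
      have : ⊥ ∈ (uCone {a} : Set Q) := h ▸ Set.mem_univ _
      exact ha (le_bot_iff.1 (this a rfl))
  obtain ⟨M, hFM, hM⟩ := exists_maxLFilter hprin.1 hprin.2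
  obtain ⟨hPI, hmin⟩ := compl_maxLFilter_minPrime hQ hM
  exact ⟨Mᶜ, ⟨hPI, hmin⟩, fun h => h (hFM (fun b hb => by
    rw [Set.mem_singleton_iff] at hb; exact hb.le))⟩

/-- Key lemma: in a minimal prime ideal, every element has a nonmember annihilating it. -/
lemma minPrime_ann (hQ : MemPMFPl Q) {P : Set Q} (hP : IsPrimeIdeal P)
    (hmin : ∀ P' : Set Q, IsPrimeIdeal P' → P' ⊆ P → P' = P) {a : Q} (ha : a ∈ P) :
    ∃ z, z ∉ P ∧ lCone {a, z} = ({⊥} : Set Q) := by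
  set F := Pᶜ with hFdef
  obtain ⟨hFl, hFne⟩ := compl_primeIdeal_lFilter hP
  -- F is a maximal ℓ-filter
  have hFmaxL : IsMaxLFilter F := by
    refine ⟨hFl, hFne, ?_⟩
    intro G hG hGne hFG
    obtain ⟨M, hGM, hM⟩ := exists_maxLFilter hG hGne
    obtain ⟨hPI, _⟩ := compl_maxLFilter_minPrime hQ hM
    have hsub : Mᶜ ⊆ P := by
      intro x hx
      by_contra hxP
      exact hx (hGM (hFG hxP))
    have := hmin Mᶜ hPI hsub
    have hMF : M = F := by rw [← compl_compl M, this]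
    exact hFG.antisymm (hMF ▸ hGM)
  have hFmax : IsMaxFilter F := hQ.2 F hFmaxL
  by_contra h
  push_neg at h
  -- build the filter generated by F and a
  set G : Set Q := {g | ∃ f ∈ F, ∀ t, t ≤ a → t ≤ f → t ≤ g} with hGdef
  obtain ⟨f₀, hf₀⟩ := hFl.1.1
  have haG : a ∈ G := ⟨f₀, hf₀, fun t ht _ => ht⟩
  have hFG : F ⊆ G := fun g hg => ⟨g, hg, fun t _ ht => ht⟩
  have hGfilter : IsPFilter G := by
    refine ⟨⟨a, haG⟩, ?_⟩
    rintro g ⟨f₁, hf₁, h₁⟩ h' ⟨f₂, hf₂, h₂⟩ c hc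
    obtain ⟨f, hfl, hfF⟩ := hFl.2 f₁ hf₁ f₂ hf₂
    refine ⟨f, hfF, fun t hta htf => ?_⟩
    have h1 := mem_lCone_pair.1 hfl
    exact hc t (mem_lCone_pair.2 ⟨h₁ t hta (htf.trans h1.1), h₂ t hta (htf.trans h1.2)⟩)
  have hGne : G ≠ Set.univ := by
    intro hu
    have : ⊥ ∈ G := hu ▸ Set.mem_univ _
    obtain ⟨f, hfF, hf⟩ := this
    refine h f hfF (lCone_pair_eq_bot_iff.2 fun t hta htf => le_bot_iff.1 (hf t hta htf))
  have hEq := hFmax.2.2 G hGfilter hGne hFG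
  rw [← hEq] at haG
  exact haG ha

end ZD

open ZD in
/-- For a poset `Q` in `P^ℓ_MFP`, the following are equivalent:
(i) for every `x` there is `y ∈ x^⊥` with `x^⊥ ∩ y^⊥ = {0}`;
(ii) for every `x` there is `y` with `V'(y) = V'(x^⊥)` (a minimal prime contains `y`
iff it contains the set `x^⊥`). -/
theorem stmt_5 (Q : Type*) [PartialOrder Q] [OrderBot Q] (hQ : MemPMFPl Q) :
    (∀ x : Q, ∃ y ∈ ann x, ann x ∩ ann y = ({⊥} : Set Q)) ↔
      (∀ x : Q, ∃ y : Q,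
        {P ∈ MinSpec Q | y ∈ P.1} = {P ∈ MinSpec Q | ann x ⊆ P.1}) := by
  constructor
  · intro h x
    obtain ⟨y, hyx, hxy⟩ := h x
    refine ⟨y, ?_⟩
    ext P
    simp only [Set.mem_setOf_eq, Set.mem_sep_iff]
    refine and_congr_right fun hPmin => ⟨?_, fun hsub => hsub hyx⟩
    intro hyP
    obtain ⟨z, hzP, hz⟩ := minPrime_ann hQ P.2 hPmin hyP
    by_contra hnot
    obtain ⟨w, hwann, hwP⟩ := Set.not_subset.1 hnot
    -- z, w ∉ P, so some t ∈ {z,w}^ℓ avoids P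
    have hex : ∃ t ∈ lCone {z, w}, t ∉ P.1 := by
      by_contra hc
      push_neg at hc
      rcases P.2.2.2 z w (fun t ht => hc t ht) with h' | h'
      · exact hzP h'
      · exact hwP h'
    obtain ⟨t, htl, htP⟩ := hex
    have ht := mem_lCone_pair.1 htl
    have htx : t ∈ ann x := ann_downClosed hwann ht.2
    have hty : t ∈ ann y := by
      have hz' : z ∈ ann y := hz
      exact ann_downClosed hz' ht.1
    have : t = ⊥ := by
      have : t ∈ ann x ∩ ann y := ⟨htx, hty⟩
      rw [hxy] at this
      exact this
    exact htP (this ▸ P.2.bot_mem)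
  · intro h x
    obtain ⟨y, hy⟩ := h x
    have key : ∀ P : Set Q, IsPrimeIdeal P → (∀ P', IsPrimeIdeal P' → P' ⊆ P → P' = P) →
        (y ∈ P ↔ ann x ⊆ P) := by
      intro P hP hmin
      have hiff := Set.ext_iff.1 hy ⟨P, hP⟩
      have hMem : (⟨P, hP⟩ : Spec Q) ∈ MinSpec Q := hmin
      exact ⟨fun hyP => (hiff.1 ⟨hMem, hyP⟩).2, fun hsub => (hiff.2 ⟨hMem, hsub⟩).2⟩
    have hyann : y ∈ ann x := by
      rw [mem_ann_iff]
      intro t htx hty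
      by_contra htbot
      obtain ⟨P, ⟨hP, hmin⟩, htP⟩ := exists_minPrime_notMem hQ htbot
      have hxP : x ∉ P := fun hxP => htP (hP.1.downClosed hxP htx)
      have hyP : y ∉ P := fun hyP => htP (hP.1.downClosed hyP hty)
      have hsub : ann x ⊆ P := by
        intro z hz
        have hsubP : lCone {x, z} ⊆ P := by
          rw [show lCone {x, z} = ({⊥} : Set Q) from hz]
          intro s hs
          rw [hs]; exact hP.bot_mem
        rcases hP.2.2 x z hsubP with h' | h'
        · exact absurd h' hxP
        · exact h'
      exact hyP ((key P hP hmin).2 hsub)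
    refine ⟨y, hyann, ?_⟩
    apply Set.eq_singleton_iff_unique_mem.2
    refine ⟨⟨bot_mem_ann x, bot_mem_ann y⟩, ?_⟩
    rintro t ⟨htx, hty⟩
    by_contra htbot
    obtain ⟨P, ⟨hP, hmin⟩, htP⟩ := exists_minPrime_notMem hQ htbot
    have hnsub : ¬ ann x ⊆ P := fun hsub => htP (hsub htx)
    have hyP : y ∉ P := fun hyP => hnsub ((key P hP hmin).1 hyP)
    have hsubP : lCone {y, t} ⊆ P := by
      rw [show lCone {y, t} = ({⊥} : Set Q) from hty]
      intro s hs
      rw [hs]; exact hP.bot_mem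
    rcases hP.2.2 y t hsubP with h' | h'
    · exact hyP h'
    · exact htP h'
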